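/- Let V be a value co-quantale with symmetric distance d_V, D an ultrafilter on a set I, and (M_i, d_{M_i})_{i∈I} a family of V-continuity spaces each of whose distances is symmetric. Let (a_i), (b_i), (c_i), (e_i) ∈ ∏_{i∈I} M_i and suppose 0 is a D-ultralimit of (d_{M_i}(a_i,b_i))_{i∈I} and 0 is a D-ultralimit of (d_{M_i}(c_i,e_i))_{i∈I}. If L ∈ V is a D-ultralimit of (d_{M_i}(a_i,c_i))_{i∈I}, then L is also a D-ultralimit of (d_{M_i}(b_i,e_i))_{i∈I}. (Hence the D-ultraproduct distance on (∏_{i∈I} M_i)/∼ is well defined.) -/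
import Mathlib


/-- A co-quantale: a complete lattice with a commutative monoid operation `+`
whose identity `0` is the bottom element and which distributes over arbitrary infima. -/
class CoQuantale (V : Type*) extends CompleteLattice V, AddCommMonoid V where
  bot_eq_zero : (⊥ : V) = 0
  add_sInf : ∀ (a : V) (s : Set V), a + sInf s = ⨅ b ∈ s, a + b

/-- Truncated subtraction `a ∸ b := ⨅ {r | a ≤ r + b}`. -/
noncomputable def cosub {V : Type*} [CoQuantale V] (a b : V) : V :=
  sInf {r | a ≤ r + b}

/-- `x` is co-well below `y` (`x ≺ y`). -/
def cwb {L : Type*} [CompleteLattice L] (x y : L) : Prop :=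
  ∀ A : Set L, sInf A ≤ x → ∃ a ∈ A, a ≤ y

/-- A value co-quantale: a co-quantale whose underlying lattice is a value lattice. -/
class ValueCoQuantale (V : Type*) extends CoQuantale V where
  completely_distrib : ∀ a : V, a = sInf {b | cwb a b}
  zero_cwb_top : cwb (0 : V) ⊤
  cwb_inf : ∀ δ δ' : V, cwb (0 : V) δ → cwb (0 : V) δ' → cwb (0 : V) (δ ⊓ δ')

/-- The symmetric distance on a co-quantale. -/
noncomputable def symd {V : Type*} [CoQuantale V] (a b : V) : V :=
  cosub a b ⊔ cosub b a

/-- The positives filter `V⁺ = {ε : V // 0 ≺ ε}`. -/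
abbrev Pos (V : Type*) [ValueCoQuantale V] : Type _ := {ε : V // cwb (0 : V) ε}

/-- `Δ : V⁺ → V⁺` is a modulus of uniform continuity for `f`. -/
def IsModulus {V : Type*} [ValueCoQuantale V] {M N : Type*}
    (dM : M → M → V) (dN : N → N → V) (f : M → N) (Δ : Pos V → Pos V) : Prop :=
  ∀ x y : M, ∀ ε : Pos V, dM x y ≤ (Δ ε).1 → dN (f x) (f y) ≤ ε.1

/-- Uniform convergence of a sequence of maps. -/
def UnifConv {V : Type*} [ValueCoQuantale V] {M N : Type*}
    (dN : N → N → V) (f : ℕ → M → N) (g : M → N) : Prop :=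
  ∀ ε : V, cwb (0 : V) ε → ∃ n : ℕ, ∀ m ≥ n, ∀ x : M, dN (f m x) (g x) ≤ ε

/-- `l` is a `D`-ultralimit of the family `a`, w.r.t. the symmetric distance on `V`. -/
def IsUltralimit {V : Type*} [ValueCoQuantale V] {I : Type*}
    (D : Ultrafilter I) (a : I → V) (l : V) : Prop :=
  ∀ ε : V, cwb (0 : V) ε → {i | symd l (a i) ≤ ε} ∈ D

section Aux

variable {V : Type*} [ValueCoQuantale V]

lemma cq_zero_le (x : V) : (0 : V) ≤ x := CoQuantale.bot_eq_zero (V := V) ▸ bot_le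

lemma cq_add_le_add_left (c : V) {x y : V} (h : x ≤ y) : c + x ≤ c + y := by
  have h2 : c + sInf {x, y} = ⨅ z ∈ ({x, y} : Set V), c + z :=
    CoQuantale.add_sInf c {x, y}
  rw [sInf_pair, inf_eq_left.mpr h] at h2
  rw [h2]
  exact iInf₂_le y (by simp)

lemma cq_add_le_add {x y z w : V} (h1 : x ≤ y) (h2 : z ≤ w) : x + z ≤ y + w := by
  calc x + z ≤ x + w := cq_add_le_add_left x h2
    _ = w + x := add_comm _ _
    _ ≤ w + y := cq_add_le_add_left w h1
    _ = y + w := add_comm _ _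

lemma cq_le_cosub_add (a b : V) : a ≤ cosub a b + b := by
  rw [cosub, add_comm, CoQuantale.add_sInf]
  exact le_iInf₂ fun r hr => by rw [add_comm]; exact hr

lemma cq_cosub_le {a b r : V} (h : a ≤ r + b) : cosub a b ≤ r := sInf_le h

lemma cq_exists_half {ε : V} (hε : cwb (0 : V) ε) :
    ∃ δ : V, cwb (0 : V) δ ∧ δ + δ ≤ ε := by
  set P : Set V := {b | cwb (0 : V) b} with hPdef
  have hP : sInf P = 0 := (ValueCoQuantale.completely_distrib (0 : V)).symm
  set A : Set V := {z | ∃ x ∈ P, ∃ y ∈ P, z = x + y} with hAdef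
  have hA : sInf A ≤ 0 := by
    have h1 : ∀ x ∈ P, sInf A ≤ x := by
      intro x hx
      have h2 : x + sInf P = ⨅ y ∈ P, x + y := CoQuantale.add_sInf x P
      rw [hP, add_zero] at h2
      rw [h2]
      exact le_iInf₂ fun y hy => sInf_le ⟨x, hx, y, hy, rfl⟩
    calc sInf A ≤ sInf P := le_sInf h1
      _ = 0 := hP
  obtain ⟨z, hz, hzε⟩ := hε A hA
  obtain ⟨x, hx, y, hy, rfl⟩ := hz
  refine ⟨x ⊓ y, ValueCoQuantale.cwb_inf x y hx hy, ?_⟩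
  exact le_trans (cq_add_le_add inf_le_left inf_le_right) hzε

end Aux

/-- the `D`-ultraproduct distance is well defined on `∼`-classes. -/
theorem ultraproduct_dist_well_defined {V : Type*} [ValueCoQuantale V] {I : Type*}
    (D : Ultrafilter I) (M : I → Type*) (d : ∀ i, M i → M i → V)
    (hrefl : ∀ i (x : M i), d i x x = 0)
    (htrans : ∀ i (x y z : M i), d i x y ≤ d i x z + d i z y)
    (hsymm : ∀ i (x y : M i), d i x y = d i y x)
    (a b c e : ∀ i, M i)
    (hab : IsUltralimit D (fun i => d i (a i) (b i)) 0)
    (hce : IsUltralimit D (fun i => d i (c i) (e i)) 0)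
    (L : V) (hL : IsUltralimit D (fun i => d i (a i) (c i)) L) :
    IsUltralimit D (fun i => d i (b i) (e i)) L := by
  intro ε hε
  obtain ⟨δ₁, hδ₁, hδ₁ε⟩ := cq_exists_half hε
  obtain ⟨δ, hδ, hδδ₁⟩ := cq_exists_half hδ₁
  have h3δ : δ + δ + δ ≤ ε := by
    have hδle : δ ≤ δ₁ := by
      calc δ = 0 + δ := (zero_add δ).symm
        _ ≤ δ + δ := cq_add_le_add (cq_zero_le δ) le_rfl
        _ ≤ δ₁ := hδδ₁
    calc δ + δ + δ ≤ δ₁ + δ₁ := cq_add_le_add hδδ₁ hδle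
      _ ≤ ε := hδ₁ε
  have hS1 := hab δ hδ
  have hS2 := hce δ hδ
  have hS3 := hL δ hδ
  have hmem := Filter.inter_mem (Filter.inter_mem hS1 hS2) hS3
  refine Filter.mem_of_superset hmem ?_
  rintro i ⟨⟨h1, h2⟩, h3⟩
  simp only [Set.mem_setOf_eq] at h1 h2 h3 ⊢
  set A := d i (a i) (b i)
  set C := d i (c i) (e i)
  set K := d i (a i) (c i)
  set B := d i (b i) (e i)
  have hA : A ≤ δ := by
    calc A ≤ cosub A 0 + 0 := cq_le_cosub_add A 0
      _ = cosub A 0 := add_zero _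
      _ ≤ symd 0 A := le_sup_right
      _ ≤ δ := h1
  have hC : C ≤ δ := by
    calc C ≤ cosub C 0 + 0 := cq_le_cosub_add C 0
      _ = cosub C 0 := add_zero _
      _ ≤ symd 0 C := le_sup_right
      _ ≤ δ := h2
  have hLK : cosub L K ≤ δ := le_trans le_sup_left h3
  have hKL : cosub K L ≤ δ := le_trans le_sup_right h3
  have hBtri : B ≤ A + K + C := by
    calc B ≤ d i (b i) (a i) + d i (a i) (e i) := htrans i _ _ _
      _ ≤ d i (b i) (a i) + (d i (a i) (c i) + d i (c i) (e i)) :=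
          cq_add_le_add_left _ (htrans i _ _ _)
      _ = A + K + C := by rw [hsymm i (b i) (a i), add_assoc]
  have hKtri : K ≤ A + B + C := by
    calc K ≤ d i (a i) (b i) + d i (b i) (c i) := htrans i _ _ _
      _ ≤ d i (a i) (b i) + (d i (b i) (e i) + d i (e i) (c i)) :=
          cq_add_le_add_left _ (htrans i _ _ _)
      _ = A + B + C := by rw [hsymm i (e i) (c i), add_assoc]
  have hcosub1 : cosub L B ≤ δ + δ + δ := by
    apply cq_cosub_le
    calc L ≤ cosub L K + K := cq_le_cosub_add L K
      _ ≤ δ + (A + B + C) := cq_add_le_add hLK hKtri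
      _ ≤ δ + (δ + B + δ) := cq_add_le_add_left _ (cq_add_le_add (cq_add_le_add hA le_rfl) hC)
      _ = δ + δ + δ + B := by abel
  have hcosub2 : cosub B L ≤ δ + δ + δ := by
    apply cq_cosub_le
    calc B ≤ A + K + C := hBtri
      _ ≤ δ + (cosub K L + L) + δ :=
          cq_add_le_add (cq_add_le_add hA (cq_le_cosub_add K L)) hC
      _ ≤ δ + (δ + L) + δ := cq_add_le_add (cq_add_le_add_left _ (cq_add_le_add hKL le_rfl)) le_rfl
      _ = δ + δ + δ + L := by abel
  calc symd L B ≤ δ + δ + δ := sup_le hcosub1 hcosub2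
    _ ≤ ε := h3δ
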